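/- Let M be a chain complex of R-modules and (N_n)_{n∈Z} a family of R-modules. Then the contractible complex ⊕_{n∈Z} \overline{N_n}[n] lies in the subprojectivity domain of M if and only if N_n lies in the subprojectivity domain of the module M_n for every integer n. -/

import Mathlib

open CategoryTheory CategoryTheory.Limits

universe u

/-- `N` belongs to the subprojectivity domain of `M`: every morphism `M ⟶ N` factors
through a projective object. -/
def SubprojDomain {A : Type*} [Category A] (M N : A) : Prop :=
  ∀ f : M ⟶ N, ∃ (P : A) (_ : Projective P) (a : M ⟶ P) (b : P ⟶ N), a ≫ b = f

/-- The disc complex `\overline{N}[n]`: the module `N` placed in degrees `n+1` and `n`,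
connected by the identity, and `0` elsewhere. -/
def disc {R : Type u} [Ring R] (N : ModuleCat.{u} R) (n : ℤ) :
    ChainComplex (ModuleCat.{u} R) ℤ where
  X i := if i = n + 1 ∨ i = n then N else ModuleCat.of R PUnit
  d i j :=
    if h : i = n + 1 ∧ j = n then
      eqToHom (if_pos (Or.inl h.1)) ≫ eqToHom (if_pos (Or.inr h.2)).symm
    else 0
  shape i j h := by
    try dsimp only
    rw [dif_neg]
    rintro ⟨rfl, rfl⟩
    exact h rfl
  d_comp_d' i j k hij hjk := by
    simp only [ComplexShape.down_Rel] at hij hjk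
    try dsimp only
    by_cases hc : j = n + 1 ∧ k = n
    · rw [dif_neg (by omega), zero_comp]
    · rw [dif_neg hc, comp_zero]

/-!
`disc N n` is right adjoint to evaluation in degree `n` and left adjoint to evaluation in
degree `n + 1`. Hence `eval n` and `disc · n` are each left adjoint to an epimorphism-preserving
functor, so both preserve projectives, and subprojectivity transfers along `eval n ⊣ disc · n`. In each degree
only two of the discs `disc (N n) n` are nonzero, so their coproduct is also their product:
a map `M ⟶ ∐ disc (N n) n` is a family of maps `M.X n ⟶ N n`, and factoring each of them
through a projective `Q n` factors the whole map through the projective `∐ disc (Q n) n`.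
-/

namespace SubprojDomain

variable {C D : Type*} [Category C] [Category D]

lemma of_retract {X Y Y' : C} (h : SubprojDomain X Y) (e : Retract Y' Y) :
    SubprojDomain X Y' := by
  intro f
  obtain ⟨P, hP, a, b, hab⟩ := h (f ≫ e.i)
  exact ⟨P, hP, a, b ≫ e.r, by rw [reassoc_of% hab, e.retract, Category.comp_id]⟩

lemma of_adjunction {F : C ⥤ D} {G : D ⥤ C} (adj : F ⊣ G) [F.PreservesProjectiveObjects]
    {X : C} {Y : D} (h : SubprojDomain X (G.obj Y)) : SubprojDomain (F.obj X) Y := by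
  intro f
  obtain ⟨P, hP, a, b, hab⟩ := h (adj.homEquiv _ _ f)
  refine ⟨F.obj P, F.projective_obj_of_projective hP, F.map a, (adj.homEquiv _ _).symm b, ?_⟩
  rw [← adj.homEquiv_naturality_left_symm, hab, Equiv.symm_apply_apply]

lemma exists_comp_map_eq_of_adjunction {F : C ⥤ D} {G : D ⥤ C} (adj : F ⊣ G) {X : C} {Y : D}
    (h : SubprojDomain (F.obj X) Y) (f : X ⟶ G.obj Y) :
    ∃ (Q : D) (_ : Projective Q) (a : X ⟶ G.obj Q) (b : Q ⟶ Y), a ≫ G.map b = f := by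
  obtain ⟨Q, hQ, a, b, hab⟩ := h ((adj.homEquiv _ _).symm f)
  refine ⟨Q, hQ, adj.homEquiv _ _ a, b, ?_⟩
  rw [← adj.homEquiv_naturality_right, hab, Equiv.apply_symm_apply]

end SubprojDomain

namespace CategoryTheory

lemma Projective.sigma {C β : Type*} [Category C] (g : β → C) [HasCoproduct g]
    [∀ b, Projective (g b)] : Projective (∐ g) where
  factors f e _ := ⟨Limits.Sigma.desc fun b => factorThru (Limits.Sigma.ι g b ≫ f) e,
    Limits.Sigma.hom_ext _ _ fun b => by simp⟩

namespace Limits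

lemma Sigma.map_comp_π {C β : Type*} [Category C] [HasZeroMorphisms C] [DecidableEq β]
    {f g : β → C} [HasCoproduct f] [HasCoproduct g] (p : ∀ b, f b ⟶ g b) (b : β) :
    Limits.Sigma.map p ≫ Sigma.π g b = Sigma.π f b ≫ p b := by
  refine Sigma.hom_ext _ _ fun b' => ?_
  by_cases h : b' = b
  · subst h; simp
  · simp [Sigma.ι_π_of_ne_assoc _ h, Sigma.ι_π_of_ne _ h]

def Cofan.IsColimit.isLimitFanMk {C β : Type*} [Category C] [Preadditive C] {f : β → C}
    {P : C} {ι : ∀ b, f b ⟶ P} {π : ∀ b, P ⟶ f b} (hc : IsColimit (Cofan.mk P ι))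
    (hιπ : ∀ b, ι b ≫ π b = 𝟙 _) (hιπ_ne : ∀ b b', b ≠ b' → ι b ≫ π b' = 0)
    (S : Finset β) (hS : ∀ b ∉ S, IsZero (f b)) :
    IsLimit (Fan.mk P π) :=
  have comp_sum : ∀ {T : C} (g : ∀ b, T ⟶ f b) (b' : β),
      (∑ b ∈ S, g b ≫ ι b) ≫ π b' = g b' := fun g b' => by
    by_cases hb' : b' ∈ S
    · rw [Preadditive.sum_comp, Finset.sum_eq_single b' (fun b _ hb => by
        rw [Category.assoc, hιπ_ne b b' hb, comp_zero]) (fun h => (h hb').elim),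
        Category.assoc, hιπ, Category.comp_id]
    · exact (hS b' hb').eq_of_tgt _ _
  have sum_eq_id : ∑ b ∈ S, π b ≫ ι b = 𝟙 P :=
    Cofan.IsColimit.hom_ext hc _ _ fun b => by
      by_cases hb : b ∈ S
      · change ι b ≫ _ = ι b ≫ _
        rw [Preadditive.comp_sum, Finset.sum_eq_single b (fun b' _ hb' => by
          rw [← Category.assoc, hιπ_ne b b' hb'.symm, zero_comp]) (fun h => (h hb).elim),
          ← Category.assoc, hιπ, Category.id_comp, Category.comp_id]
      · exact (hS b hb).eq_of_src _ _
  Fan.IsLimit.mk _ (fun s => ∑ b ∈ S, s.proj b ≫ ι b) (fun s => comp_sum s.proj)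
    (fun s m (hm : ∀ b, m ≫ π b = s.proj b) => by
      rw [← Category.comp_id m]
      simp only [Fan.mk_pt, ← sum_eq_id, Preadditive.comp_sum, ← Category.assoc, hm])

end Limits

end CategoryTheory

noncomputable def HomologicalComplex.coproductIsProduct {C ι J : Type*} [Category C]
    [Preadditive C] {c : ComplexShape ι} [DecidableEq J] [HasColimitsOfShape (Discrete J) C]
    (K : J → HomologicalComplex C c) (S : ι → Finset J)
    (hS : ∀ i, ∀ j ∉ S i, IsZero ((K j).X i)) :
    IsLimit (Fan.mk (∐ K) (Sigma.π K)) :=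
  isLimitOfEval _ _ fun i =>
    (isLimitMapConeFanMkEquiv (eval C c i) K (Sigma.π K)).symm <|
      Cofan.IsColimit.isLimitFanMk
        ((isColimitMapCoconeCofanMkEquiv (eval C c i) K (Sigma.ι K))
          (isColimitOfPreserves (eval C c i) (coproductIsCoproduct K)))
        (fun j => congr_arg (fun φ => φ.f i) (Sigma.ι_π_eq_id K j))
        (fun _ _ h => congr_arg (fun φ => φ.f i) (Sigma.ι_π_of_ne K h)) (S i) (hS i)

section Disc

variable {R : Type u} [Ring R]

lemma isZero_disc_X (N : ModuleCat.{u} R) {n k : ℤ} (h₁ : k ≠ n + 1) (h₀ : k ≠ n) :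
    IsZero ((disc N n).X k) := by
  simp only [disc, if_neg (not_or.2 ⟨h₁, h₀⟩)]
  exact ModuleCat.isZero_of_subsingleton _

def discXIso (N : ModuleCat.{u} R) {n k : ℤ} (h : k = n + 1 ∨ k = n) : (disc N n).X k ≅ N :=
  eqToIso (if_pos h)

lemma disc_d (N : ModuleCat.{u} R) (n : ℤ) :
    (disc N n).d (n + 1) n = (discXIso N (.inl rfl)).hom ≫ (discXIso N (.inr rfl)).inv :=
  dif_pos ⟨rfl, rfl⟩

lemma disc_d_eq_zero (N : ModuleCat.{u} R) {n i j : ℤ} (h : j ≠ n) : (disc N n).d i j = 0 :=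
  dif_neg (by tauto)

instance (N : ModuleCat.{u} R) (n : ℤ) : IsIso ((disc N n).d (n + 1) n) := by
  rw [disc_d]; infer_instance

variable {M K : ChainComplex (ModuleCat.{u} R) ℤ} {N : ModuleCat.{u} R} {n : ℤ}

lemma to_disc_hom_ext {φ φ' : M ⟶ disc N n} (h : φ.f n = φ'.f n) : φ = φ' := by
  refine HomologicalComplex.hom_ext _ _ fun k => ?_
  by_cases h₀ : k = n
  · subst h₀; exact h
  by_cases h₁ : k = n + 1
  · subst h₁
    rw [← cancel_mono ((disc N n).d (n + 1) n), φ.comm, φ'.comm, h]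
  · exact (isZero_disc_X N h₁ h₀).eq_of_tgt _ _

lemma from_disc_hom_ext {φ φ' : disc N n ⟶ K} (h : φ.f (n + 1) = φ'.f (n + 1)) :
    φ = φ' := by
  refine HomologicalComplex.hom_ext _ _ fun k => ?_
  by_cases h₁ : k = n + 1
  · subst h₁; exact h
  by_cases h₀ : k = n
  · subst h₀
    rw [← cancel_epi ((disc N k).d (k + 1) k), ← φ.comm, ← φ'.comm, h]
  · exact (isZero_disc_X N h₁ h₀).eq_of_src _ _

def mkHomToDisc (g : M.X n ⟶ N) : M ⟶ disc N n where
  f k :=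
    if h₀ : k = n then eqToHom (by rw [h₀]) ≫ g ≫ (discXIso N (.inr h₀)).inv
    else if h₁ : k = n + 1 then
      eqToHom (by rw [h₁]) ≫ M.d (n + 1) n ≫ g ≫ (discXIso N (.inl h₁)).inv
    else 0
  comm' i j hij := by
    obtain rfl : i = j + 1 := hij.symm
    by_cases h₀ : j = n
    · subst h₀
      simp [disc_d]
    by_cases h₁ : j = n + 1
    · subst h₁
      simp [disc_d_eq_zero N h₀]
    · exact (isZero_disc_X N h₁ h₀).eq_of_tgt _ _

@[simp]
lemma mkHomToDisc_f_self (g : M.X n ⟶ N) :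
    (mkHomToDisc g).f n = g ≫ (discXIso N (.inr rfl)).inv := by
  simp [mkHomToDisc]

@[simp]
lemma mkHomToDisc_f_succ (g : M.X n ⟶ N) :
    (mkHomToDisc g).f (n + 1) = M.d (n + 1) n ≫ g ≫ (discXIso N (.inl rfl)).inv := by
  simp [mkHomToDisc]

def mkHomFromDisc (g : N ⟶ K.X (n + 1)) : disc N n ⟶ K where
  f k :=
    if h₁ : k = n + 1 then (discXIso N (.inl h₁)).hom ≫ g ≫ eqToHom (by rw [h₁])
    else if h₀ : k = n then
      (discXIso N (.inr h₀)).hom ≫ g ≫ K.d (n + 1) n ≫ eqToHom (by rw [h₀])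
    else 0
  comm' i j hij := by
    obtain rfl : i = j + 1 := hij.symm
    by_cases h₀ : j = n
    · subst h₀
      simp [disc_d]
    by_cases h₁ : j + 1 = n
    · subst h₁
      simp [disc_d_eq_zero N h₀]
    · exact (isZero_disc_X N (by omega) h₁).eq_of_src _ _

@[simp]
lemma mkHomFromDisc_f_succ (g : N ⟶ K.X (n + 1)) :
    (mkHomFromDisc g).f (n + 1) = (discXIso N (.inl rfl)).hom ≫ g := by
  simp [mkHomFromDisc]

-- Reducible, so that lemmas about `disc N n` apply to `(discFunctor R n).obj N`.
variable (R) in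
abbrev discFunctor (n : ℤ) : ModuleCat.{u} R ⥤ ChainComplex (ModuleCat.{u} R) ℤ where
  obj N := disc N n
  map g := mkHomToDisc ((discXIso _ (.inr rfl)).hom ≫ g)
  map_id N := to_disc_hom_ext (by simp)
  map_comp f g := to_disc_hom_ext (by simp)

lemma mkHomToDisc_comp {N' : ModuleCat.{u} R} (g : M.X n ⟶ N) (h : N ⟶ N') :
    mkHomToDisc (g ≫ h) = mkHomToDisc g ≫ (discFunctor R n).map h :=
  to_disc_hom_ext (by simp)

lemma mkHomFromDisc_comp {N' : ModuleCat.{u} R} (h : N' ⟶ N) (g : N ⟶ K.X (n + 1)) :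
    mkHomFromDisc (h ≫ g) = (discFunctor R n).map h ≫ mkHomFromDisc g :=
  from_disc_hom_ext (by simp [disc_d])

def homToDiscEquiv : (M.X n ⟶ N) ≃ (M ⟶ disc N n) where
  toFun := mkHomToDisc
  invFun φ := φ.f n ≫ (discXIso N (.inr rfl)).hom
  left_inv g := by simp
  right_inv φ := to_disc_hom_ext (by simp)

def homFromDiscEquiv : (disc N n ⟶ K) ≃ (N ⟶ K.X (n + 1)) where
  toFun φ := (discXIso N (.inl rfl)).inv ≫ φ.f (n + 1)
  invFun := mkHomFromDisc
  left_inv φ := from_disc_hom_ext (by simp)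
  right_inv g := by simp

variable (R) in
def evalDiscAdjunction (n : ℤ) :
    HomologicalComplex.eval (ModuleCat.{u} R) (ComplexShape.down ℤ) n ⊣ discFunctor R n :=
  Adjunction.mkOfHomEquiv
    { homEquiv _ _ := homToDiscEquiv
      homEquiv_naturality_left_symm f g := Category.assoc (f.f n) (g.f n) _
      homEquiv_naturality_right := mkHomToDisc_comp }

variable (R) in
def discEvalAdjunction (n : ℤ) :
    discFunctor R n ⊣ HomologicalComplex.eval (ModuleCat.{u} R) (ComplexShape.down ℤ) (n + 1) :=
  Adjunction.mkOfHomEquiv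
    { homEquiv _ _ := homFromDiscEquiv
      homEquiv_naturality_left_symm := mkHomFromDisc_comp
      homEquiv_naturality_right f g := (Category.assoc _ (f.f (n + 1)) (g.f (n + 1))).symm }

instance (n : ℤ) : (discFunctor R n).PreservesProjectiveObjects :=
  Functor.preservesProjectiveObjects_of_adjunction_of_preservesEpimorphisms (discEvalAdjunction R n)

instance (n : ℤ) : (HomologicalComplex.eval (ModuleCat.{u} R) (ComplexShape.down ℤ) n)
    |>.PreservesProjectiveObjects :=
  have := Functor.preservesEpimorphisms_of_adjunction (discEvalAdjunction R n)
  Functor.preservesProjectiveObjects_of_adjunction_of_preservesEpimorphisms (evalDiscAdjunction R n)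

noncomputable def sigmaDiscIsProduct (N : ℤ → ModuleCat.{u} R) :
    IsLimit (Fan.mk (∐ fun n => disc (N n) n) (Sigma.π _)) :=
  HomologicalComplex.coproductIsProduct _ (fun k => {k, k - 1}) fun k n hn => by
    simp only [Finset.mem_insert, Finset.mem_singleton, not_or] at hn
    exact isZero_disc_X _ (by omega) (by omega)

end Disc

lemma subprojDomain_sigma_disc {R : Type u} [Ring R] {M : ChainComplex (ModuleCat.{u} R) ℤ}
    {N : ℤ → ModuleCat.{u} R} (h : ∀ n, SubprojDomain (M.X n) (N n)) :
    SubprojDomain M (∐ fun n => disc (N n) n) := by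
  intro f
  choose Q hQ a b hab using fun n =>
    (h n).exists_comp_map_eq_of_adjunction (evalDiscAdjunction R n) (f ≫ Sigma.π _ n)
  have : ∀ n, Projective (disc (Q n) n) := fun n =>
    (discFunctor R n).projective_obj_of_projective (hQ n)
  refine ⟨∐ fun n => disc (Q n) n, Projective.sigma _,
    Fan.IsLimit.lift (sigmaDiscIsProduct Q) a,
    Limits.Sigma.map fun n => (discFunctor R n).map (b n), ?_⟩
  refine Fan.IsLimit.hom_ext (sigmaDiscIsProduct N) _ _ fun n => ?_
  show (_ ≫ _) ≫ Sigma.π (fun n => disc (N n) n) n = f ≫ Sigma.π (fun n => disc (N n) n) n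
  rw [Category.assoc, Sigma.map_comp_π, ← Category.assoc, ← hab]
  exact congrArg (· ≫ _) (Fan.IsLimit.fac (sigmaDiscIsProduct Q) a n)

/-- the contractible complex `⊕_{n∈ℤ} \overline{N_n}[n]` lies in the
subprojectivity domain of the complex `M` iff `N_n` lies in the subprojectivity domain of
the module `M_n` for every `n`. -/
theorem sigma_disc_subprojDomain_iff
    {R : Type u} [Ring R] (M : ChainComplex (ModuleCat.{u} R) ℤ)
    (N : ℤ → ModuleCat.{u} R) :
    SubprojDomain M (∐ fun n : ℤ => disc (N n) n) ↔
      ∀ n : ℤ, SubprojDomain (M.X n) (N n) := by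
  refine ⟨fun h n => ?_, subprojDomain_sigma_disc⟩
  have hdisc : SubprojDomain M (disc (N n) n) :=
    h.of_retract ⟨Sigma.ι (fun n => disc (N n) n) n, Sigma.π _ n, Sigma.ι_π_eq_id _ n⟩
  exact hdisc.of_adjunction (evalDiscAdjunction R n)
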